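/- arXiv:1704.04892 — 2 statements merged into one kernel-verified Lean document; each statement's English description precedes it below -/
import Mathlib

section
/- The number of spanning trees of J_{2,4} that contain exactly k of the 4 spoke edges is 32 for k = 1, 80 for k = 2, 64 for k = 3, and 16 for k = 4. -/
open SimpleGraph

/-- The Jahangir graph `J_{n,m}`: a cycle on `n*m` vertices (`some i`) plus a
central vertex `none` adjacent to the `m` vertices whose index is divisible by `n`. -/
def jahangir (n m : ℕ) : SimpleGraph (Option (Fin (n * m))) :=
  SimpleGraph.fromRel (fun a b =>
    match a, b with
    | some i, some j => (j : ℕ) = ((i : ℕ) + 1) % (n * m)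
    | none, some i => n ∣ (i : ℕ)
    | _, _ => False)

/-- The number of spanning trees of a graph. -/
noncomputable def spanningTreeCount {V : Type*} (G : SimpleGraph V) : ℕ :=
  Nat.card {H : G.Subgraph // H.IsSpanning ∧ H.coe.IsTree}

/-- The number of spoke edges (edges at the central vertex) of a subgraph of `J_{n,m}`. -/
noncomputable def spokeCount {n m : ℕ} (H : (jahangir n m).Subgraph) : ℕ :=
  {i : Fin (n * m) | H.Adj none (some i)}.ncard

/-!
A spanning subgraph is determined by its edge set, so spanning trees of `J_{2,4}` correspond to
those 8-element subsets of its 12 edges that connect all 9 vertices; connectivity is witnessed by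
8 rounds of breadth-first search from the centre, and the spokes of a tree are the chosen edges at
the centre. The four counts are then a finite check over the `2 ^ 12` edge subsets.
-/

open Finset

namespace SimpleGraph

variable {V : Type*}

section SpanningSubgraph

variable (G : SimpleGraph V) [Fintype G.edgeSet]

lemma fromEdgeSet_le_of_subset_edgeFinset {E : Finset (Sym2 V)} (hE : E ⊆ G.edgeFinset) :
    fromEdgeSet (E : Set (Sym2 V)) ≤ G :=
  (G.fromEdgeSet_le).mpr fun _ he => G.mem_edgeFinset.mp (hE he.1)

lemma fromEdgeSet_filter_mem_edgeSet (H : G.Subgraph) [DecidablePred (· ∈ H.edgeSet)] :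
    fromEdgeSet ↑{e ∈ G.edgeFinset | e ∈ H.edgeSet} = H.spanningCoe := by
  ext u v
  simp only [coe_filter, mem_edgeFinset, Set.sep_mem_eq, fromEdgeSet_inter, fromEdgeSet_edgeSet,
    inf_adj, fromEdgeSet_adj, Subgraph.mem_edgeSet, Subgraph.spanningCoe_adj]
  exact ⟨fun h => h.2.1, fun h => ⟨H.adj_sub h, h, h.ne⟩⟩

open scoped Classical in
noncomputable def spanningSubgraphEquiv :
    {H : G.Subgraph // H.IsSpanning} ≃ {E : Finset (Sym2 V) // E ⊆ G.edgeFinset} where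
  toFun H := ⟨{e ∈ G.edgeFinset | e ∈ H.1.edgeSet}, filter_subset _ _⟩
  invFun E := ⟨toSubgraph (fromEdgeSet (E.1 : Set (Sym2 V)))
    (G.fromEdgeSet_le_of_subset_edgeFinset E.2), toSubgraph.isSpanning _ _⟩
  left_inv H := Subtype.ext <| Subgraph.ext H.2.verts_eq_univ.symm <|
    congrArg Adj (G.fromEdgeSet_filter_mem_edgeSet H.1)
  right_inv E := by
    obtain ⟨E, hE⟩ := E
    ext e
    induction e using Sym2.ind with
    | _ u v =>
      have hadj (h : s(u, v) ∈ E) : G.Adj u v := G.mem_edgeFinset.mp (hE h)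
      simp only [mem_filter, mem_edgeFinset, mem_edgeSet, Subgraph.mem_edgeSet, toSubgraph_adj,
        fromEdgeSet_adj, SetLike.mem_coe]
      exact ⟨fun h => h.2.1, fun h => ⟨hadj h, h, (hadj h).ne⟩⟩

open scoped Classical in
lemma spanningCoe_spanningSubgraphEquiv (H : {H : G.Subgraph // H.IsSpanning}) :
    H.1.spanningCoe = fromEdgeSet ↑(G.spanningSubgraphEquiv H).1 :=
  (G.fromEdgeSet_filter_mem_edgeSet H.1).symm

theorem card_spanningSubgraph_eq_card_filter (P : G.Subgraph → Prop)
    (Q : Finset (Sym2 V) → Prop) [DecidablePred Q]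
    (hPQ : ∀ H : G.Subgraph, H.IsSpanning → ∀ E ⊆ G.edgeFinset,
      H.spanningCoe = fromEdgeSet ↑E → (P H ↔ Q E)) :
    Nat.card {H : G.Subgraph // H.IsSpanning ∧ P H} = #{E ∈ G.edgeFinset.powerset | Q E} := by
  rw [← Nat.card_eq_finsetCard]
  refine Nat.card_congr <| (Equiv.subtypeSubtypeEquivSubtypeInter _ P).symm.trans <|
    (G.spanningSubgraphEquiv.subtypeEquiv (q := fun E => Q E.1) fun H =>
      hPQ H.1 H.2 _ (G.spanningSubgraphEquiv H).2 (G.spanningCoe_spanningSubgraphEquiv H)).trans <|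
    (Equiv.subtypeSubtypeEquivSubtypeInter _ Q).trans (Equiv.subtypeEquivRight fun E => by simp)

end SpanningSubgraph

lemma ncard_neighborSet_fromEdgeSet [DecidableEq V] {E : Finset (Sym2 V)}
    (hE : ∀ e ∈ E, ¬e.IsDiag) (v : V) :
    ((fromEdgeSet (E : Set (Sym2 V))).neighborSet v).ncard = #{e ∈ E | v ∈ e} := by
  rw [← Set.ncard_congr' ((fromEdgeSet _).incidenceSetEquivNeighborSet v), ← Set.ncard_coe_finset]
  congr 1
  ext e
  simp only [incidenceSet, edgeSet_fromEdgeSet, Set.mem_sdiff, SetLike.mem_coe, Sym2.mem_diagSet,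
    Set.mem_ofPred_eq, coe_filter, and_congr_left_iff, and_iff_left_iff_imp]
  exact fun _ => hE e

section Reachability

variable [DecidableEq V]

-- Phrased through the edges rather than through adjacency so that the kernel evaluates it fast.
def extendAlong (E : Finset (Sym2 V)) (m : Finset V) : Finset V :=
  m ∪ E.biUnion (Sym2.lift ⟨fun a b => if a ∈ m ∨ b ∈ m then {a, b} else ∅, fun a b => by
    simp only [or_comm, pair_comm]⟩)

lemma mem_extendAlong {E : Finset (Sym2 V)} {m : Finset V} {v : V} :
    v ∈ extendAlong E m ↔ v ∈ m ∨ ∃ u ∈ m, (fromEdgeSet (E : Set (Sym2 V))).Adj u v := by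
  simp only [extendAlong, mem_union, mem_biUnion, fromEdgeSet_adj, mem_coe]
  constructor
  · rintro (hv | ⟨e, he, hv⟩)
    · exact .inl hv
    induction e using Sym2.ind with
    | _ a b =>
      rw [Sym2.lift_mk] at hv
      grind [Sym2.eq_swap]
  · rintro (hv | ⟨u, hu, huv, -⟩)
    · exact .inl hv
    · exact .inr ⟨s(u, v), huv, by simp [hu]⟩

lemma mem_iterate_extendAlong {E : Finset (Sym2 V)} {r : V} (n : ℕ) {v : V} :
    v ∈ (extendAlong E)^[n] {r} ↔
      ∃ p : (fromEdgeSet (E : Set (Sym2 V))).Walk v r, p.length ≤ n := by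
  induction n generalizing v with
  | zero =>
    simp only [Function.iterate_zero, id_eq, mem_singleton, nonpos_iff_eq_zero]
    exact ⟨by rintro rfl; exact ⟨.nil, rfl⟩, fun ⟨p, hp⟩ => p.eq_of_length_eq_zero hp⟩
  | succ n ih =>
    simp only [Function.iterate_succ_apply', mem_extendAlong, ih]
    constructor
    · rintro (⟨p, hp⟩ | ⟨u, ⟨p, hp⟩, huv⟩)
      · exact ⟨p, by omega⟩
      · exact ⟨.cons huv.symm p, by simpa⟩
    · rintro ⟨_ | ⟨hvw, q⟩, hp⟩
      · exact .inl ⟨.nil, by simp⟩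
      · exact .inr ⟨_, ⟨q, by simpa using hp⟩, hvw.symm⟩

variable [Fintype V]

theorem connected_fromEdgeSet_iff {E : Finset (Sym2 V)} (r : V) {n : ℕ}
    (hn : Fintype.card V ≤ n + 1) :
    (fromEdgeSet (E : Set (Sym2 V))).Connected ↔ ∀ v, v ∈ (extendAlong E)^[n] {r} := by
  simp only [mem_iterate_extendAlong]
  refine ⟨fun h v => (h.preconnected v r).elim_path fun p => ⟨p, ?_⟩, fun h =>
    (connected_iff_exists_forall_reachable _).mpr ⟨r, fun v => (h v).elim fun p _ => ⟨p.reverse⟩⟩⟩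
  have := p.2.length_lt
  omega

theorem isTree_fromEdgeSet_iff {E : Finset (Sym2 V)} (hE : ∀ e ∈ E, ¬e.IsDiag) (r : V)
    {n : ℕ} (hn : Fintype.card V = n + 1) :
    (fromEdgeSet (E : Set (Sym2 V))).IsTree ↔ #E = n ∧ ∀ v, v ∈ (extendAlong E)^[n] {r} := by
  have hedges : (fromEdgeSet (E : Set (Sym2 V))).edgeSet = E := by
    rw [edgeSet_fromEdgeSet, sdiff_eq_left, Set.disjoint_left]
    exact hE
  rw [isTree_iff_connected_and_card, connected_fromEdgeSet_iff r hn.le, hedges,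
    Nat.card_coe_set_eq, Set.ncard_coe_finset, Nat.card_eq_fintype_card, hn,
    Nat.add_right_cancel_iff, and_comm]

end Reachability

end SimpleGraph

section Jahangir

variable {n m : ℕ}

@[simp] lemma jahangir_adj_none_none : ¬(jahangir n m).Adj none none := by simp [jahangir]

@[simp] lemma jahangir_adj_none_some {i : Fin (n * m)} :
    (jahangir n m).Adj none (some i) ↔ n ∣ (i : ℕ) := by simp [jahangir]

@[simp] lemma jahangir_adj_some_none {i : Fin (n * m)} :
    (jahangir n m).Adj (some i) none ↔ n ∣ (i : ℕ) := by simp [jahangir]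

@[simp] lemma jahangir_adj_some_some {i j : Fin (n * m)} :
    (jahangir n m).Adj (some i) (some j) ↔
      i ≠ j ∧ ((j : ℕ) = (i + 1) % (n * m) ∨ (i : ℕ) = (j + 1) % (n * m)) := by
  simp [jahangir]

instance : DecidableRel (jahangir n m).Adj
  | none, none => isFalse jahangir_adj_none_none
  | none, some _ => decidable_of_iff _ jahangir_adj_none_some.symm
  | some _, none => decidable_of_iff _ jahangir_adj_some_none.symm
  | some _, some _ => decidable_of_iff _ jahangir_adj_some_some.symm

lemma spokeCount_eq_ncard_neighborSet (H : (jahangir n m).Subgraph) :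
    spokeCount H = (H.spanningCoe.neighborSet none).ncard := by
  have hnbr : H.spanningCoe.neighborSet none = some '' {i | H.Adj none (some i)} := by
    ext (_ | i) <;> simp
  rw [spokeCount, hnbr, Set.ncard_image_of_injective _ (Option.some_injective _)]

end Jahangir

/-- In `J_{2,4}`, the number of spanning trees containing exactly `k` of the
four spoke edges is `32` for `k = 1`, `80` for `k = 2`, `64` for `k = 3`, and
`16` for `k = 4`. -/
theorem jahangir_two_four_spanningTrees_by_spokes :
    Nat.card {H : (jahangir 2 4).Subgraph //
        H.IsSpanning ∧ H.coe.IsTree ∧ spokeCount H = 1} = 32 ∧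
    Nat.card {H : (jahangir 2 4).Subgraph //
        H.IsSpanning ∧ H.coe.IsTree ∧ spokeCount H = 2} = 80 ∧
    Nat.card {H : (jahangir 2 4).Subgraph //
        H.IsSpanning ∧ H.coe.IsTree ∧ spokeCount H = 3} = 64 ∧
    Nat.card {H : (jahangir 2 4).Subgraph //
        H.IsSpanning ∧ H.coe.IsTree ∧ spokeCount H = 4} = 16 := by
  have count (k : ℕ) :
      Nat.card {H : (jahangir 2 4).Subgraph // H.IsSpanning ∧ H.coe.IsTree ∧ spokeCount H = k} =
        #{E ∈ (jahangir 2 4).edgeFinset.powerset |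
          (#E = 8 ∧ ∀ v, v ∈ (extendAlong E)^[8] {none}) ∧ #{e ∈ E | none ∈ e} = k} := by
    refine card_spanningSubgraph_eq_card_filter _ _ _ fun H hH E hE hHE => ?_
    have hdiag : ∀ e ∈ E, ¬e.IsDiag := fun e he => not_isDiag_of_mem_edgeFinset (hE he)
    rw [← (H.spanningCoeEquivCoeOfSpanning hH).isTree_iff, spokeCount_eq_ncard_neighborSet, hHE,
      isTree_fromEdgeSet_iff hdiag none (n := 8) rfl, ncard_neighborSet_fromEdgeSet hdiag]
  simp only [count]
  decide +kernel
end

section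
/- For any m ≥ 3, the number of spanning trees of J_{n,3}, viewed as a function of n, equals n^3 + 6n^2 + 9n; that is, σ(J_{n,3}) = n^3 + 3·(2n)·n + 3·(3n). -/
/-!
A spanning subgraph of `J_{n,3}` is determined by its set `S` of spokes and its set `D` of deleted
cycle edges ("cuts"); it has `|S| + 3n - |D|` edges, so it is a tree iff it is connected and
`|S| = |D|`. The spoked hubs divide the cycle into `|S|` arcs. In a tree every such arc carries a
cut, since otherwise a spoke would lie on a cycle, so each arc carries exactly one; conversely one
cut per arc lets every cycle vertex walk along its arc to a spoke. This leaves three shapes: three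
spokes and a cut in each of the three arcs of length `n` (`n^3` trees), two spokes `k, k + 1` with
a cut in the arc of length `n` and one in the arc of length `2n` (`3 · n · 2n`), and one spoke with
an arbitrary cut (`3 · 3n`).
-/

open SimpleGraph

section SpanningTrees

variable {V : Type*} {G : SimpleGraph V}

def spanningTreeEquiv (G : SimpleGraph V) :
    {H : G.Subgraph // H.IsSpanning ∧ H.coe.IsTree} ≃ {T : SimpleGraph V // T ≤ G ∧ T.IsTree} where
  toFun H := ⟨H.1.spanningCoe, H.1.spanningCoe_le,
    (Subgraph.spanningCoeEquivCoeOfSpanning _ H.2.1).isTree_iff.2 H.2.2⟩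
  invFun T := ⟨G.toSubgraph T.1 T.2.1, toSubgraph.isSpanning _ _,
    (Subgraph.spanningCoeEquivCoeOfSpanning _ (toSubgraph.isSpanning _ _)).isTree_iff.1 T.2.2⟩
  left_inv H := Subtype.ext <| Subgraph.ext (Subgraph.isSpanning_iff.1 H.2.1).symm rfl
  right_inv _ := rfl

theorem spanningTreeCount_eq_card (G : SimpleGraph V) :
    spanningTreeCount G = Nat.card {T : SimpleGraph V // T ≤ G ∧ T.IsTree} :=
  Nat.card_congr (spanningTreeEquiv G)

theorem connected_of_forall_reachable_none {α : Type*} {G : SimpleGraph (Option α)}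
    (h : ∀ a, G.Reachable (some a) none) : G.Connected :=
  (connected_iff_exists_forall_reachable _).2 ⟨none, fun
    | none => .rfl
    | some a => (h a).symm⟩

end SpanningTrees

namespace Jahangir

open Fin.NatCast

/-- The cycle vertices joined to the centre are the hubs `k * n`. -/
def hub (n : ℕ) [NeZero n] (k : Fin 3) : Fin (n * 3) := Nat.cast ((k : ℕ) * n)

variable {n : ℕ} [NeZero n]

theorem val_hub_add (k : Fin 3) {t : ℕ} (ht : t < n) :
    (hub n k + (t : Fin (n * 3))).val = k * n + t := by
  have : (k : ℕ) * n + t < n * 3 := by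
    have := k.2
    nlinarith
  rw [hub, ← Nat.cast_add, Fin.val_natCast, Nat.mod_eq_of_lt this]

theorem val_hub (k : Fin 3) : (hub n k).val = k * n := by
  simpa using val_hub_add (n := n) k (Nat.pos_of_neZero n)

theorem hub_add_mul (k : Fin 3) (m : ℕ) :
    hub n k + ((m * n : ℕ) : Fin (n * 3)) = hub n (k + (m : Fin 3)) := by
  rw [hub, hub, ← Nat.cast_add, ← add_mul, Fin.ext_iff, Fin.val_natCast, Fin.val_natCast,
    Fin.val_add, Fin.val_natCast, mul_comm n 3, Nat.mul_mod_mul_right, Nat.add_mod_mod,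
    Nat.mul_mod_mul_right, Nat.mod_mod]

theorem hub_succ (k : Fin 3) : hub n (k + 1) = hub n k + (n : Fin (n * 3)) := by
  simpa using (hub_add_mul k 1).symm

theorem hub_succ_add_eq (k : Fin 3) (t : ℕ) :
    hub n (k + 1) + (t : Fin (n * 3)) = hub n k + ((n + t : ℕ) : Fin (n * 3)) := by
  rw [hub_succ, Nat.cast_add, add_assoc]

theorem hub_succ_add_two_mul (k : Fin 3) :
    hub n (k + 1) + ((2 * n : ℕ) : Fin (n * 3)) = hub n k := by
  rw [hub_add_mul]
  congr 1
  fin_cases k <;> rfl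

theorem add_natCast_inj (i : Fin (n * 3)) {s t : ℕ} (hs : s < n * 3) (ht : t < n * 3) :
    i + (s : Fin (n * 3)) = i + t ↔ s = t := by
  rw [add_right_inj, Fin.ext_iff, Fin.val_natCast, Fin.val_natCast, Nat.mod_eq_of_lt hs,
    Nat.mod_eq_of_lt ht]

theorem add_natCast_val_sub (i j : Fin (n * 3)) : i + (((j - i).val : ℕ) : Fin (n * 3)) = j := by
  rw [Fin.cast_val_eq_self, add_sub_cancel]

theorem hub_add_inj {k k' : Fin 3} {s t : ℕ} (hs : s < n) (ht : t < n) :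
    hub n k + (s : Fin (n * 3)) = hub n k' + t ↔ k = k' ∧ s = t := by
  rw [Fin.ext_iff, val_hub_add k hs, val_hub_add k' ht, Fin.ext_iff]
  fin_cases k <;> fin_cases k' <;> simp <;> omega

theorem exists_eq_hub_add (i : Fin (n * 3)) :
    ∃ k : Fin 3, ∃ r < n, i = hub n k + (r : Fin (n * 3)) := by
  have hn := Nat.pos_of_neZero n
  refine ⟨⟨i / n, Nat.div_lt_of_lt_mul i.2⟩, i % n, Nat.mod_lt _ hn, Fin.ext ?_⟩
  rw [val_hub_add _ (Nat.mod_lt _ hn), Nat.div_add_mod']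

theorem add_natCast_ne_self (i : Fin (n * 3)) {t : ℕ} (h0 : 0 < t) (ht : t < n * 3) :
    i + (t : Fin (n * 3)) ≠ i := by
  conv_rhs => rw [← add_zero i, ← Nat.cast_zero]
  rw [Ne, add_natCast_inj i ht (by omega)]
  omega

theorem add_one_ne_self (i : Fin (n * 3)) : i + 1 ≠ i := by
  simp

theorem add_one_add_one_ne_self (i : Fin (n * 3)) : i + 1 + 1 ≠ i := by
  simpa [add_assoc, one_add_one_eq_two] using
    add_natCast_ne_self i two_pos (by have := Nat.pos_of_neZero n; omega)

theorem jahangir_adj_none_some {i : Fin (n * 3)} :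
    (jahangir n 3).Adj none (some i) ↔ ∃ k, hub n k = i := by
  simp only [jahangir, fromRel_adj, ne_eq, reduceCtorEq, not_false_eq_true, true_and, or_false]
  constructor
  · rintro ⟨c, hc⟩
    have : c < 3 := by nlinarith [i.2]
    exact ⟨⟨c, this⟩, Fin.ext (by rw [val_hub, hc, mul_comm])⟩
  · rintro ⟨k, rfl⟩
    exact ⟨k, by rw [val_hub, mul_comm]⟩

theorem jahangir_adj_some_some {i j : Fin (n * 3)} :
    (jahangir n 3).Adj (some i) (some j) ↔ j = i + 1 ∨ i = j + 1 := by
  have val_add_one (x : Fin (n * 3)) : (x + 1).val = (x.val + 1) % (n * 3) := by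
    simp [Fin.val_add]
  simp only [jahangir, fromRel_adj, ne_eq, Option.some.injEq, ← val_add_one, ← Fin.ext_iff]
  refine and_iff_right_of_imp ?_
  rintro (rfl | rfl)
  · exact (add_one_ne_self i).symm
  · exact add_one_ne_self j

variable (n) in
def spanning (S : Finset (Fin 3)) (D : Finset (Fin (n * 3))) :
    SimpleGraph (Option (Fin (n * 3))) :=
  fromEdgeSet ↑(S.image (fun k => s(none, some (hub n k))) ∪
    Dᶜ.image (fun i => s(some i, some (i + 1))))

variable {S : Finset (Fin 3)} {D : Finset (Fin (n * 3))}

@[simp]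
theorem spanning_adj_none_some {i : Fin (n * 3)} :
    (spanning n S D).Adj none (some i) ↔ ∃ k ∈ S, hub n k = i := by
  simp [spanning]

@[simp]
theorem spanning_adj_some_none {i : Fin (n * 3)} :
    (spanning n S D).Adj (some i) none ↔ ∃ k ∈ S, hub n k = i := by
  rw [adj_comm, spanning_adj_none_some]

@[simp]
theorem not_spanning_adj_none_none : ¬ (spanning n S D).Adj none none := by
  simp [spanning]

theorem spanning_adj_some_some {i j : Fin (n * 3)} :
    (spanning n S D).Adj (some i) (some j) ↔ i ∉ D ∧ j = i + 1 ∨ j ∉ D ∧ i = j + 1 := by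
  have := add_one_ne_self i
  have := add_one_ne_self j
  simp only [spanning, fromEdgeSet_adj, Finset.coe_union, Finset.coe_image, Set.mem_union,
    Set.mem_image, Finset.mem_coe, Finset.mem_compl, Sym2.eq_iff]
  grind

@[simp]
theorem spanning_adj_add_one {i : Fin (n * 3)} :
    (spanning n S D).Adj (some i) (some (i + 1)) ↔ i ∉ D := by
  rw [spanning_adj_some_some]
  have := add_one_add_one_ne_self i
  grind

theorem hub_injective : Function.Injective (hub n) := fun k k' h =>
  Fin.ext <| Nat.eq_of_mul_eq_mul_right (Nat.pos_of_neZero n) <| by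
    rw [← val_hub, ← val_hub, h]

theorem spanning_le : spanning n S D ≤ jahangir n 3 := by
  rintro (_ | i) (_ | j) h
  · simp at h
  · obtain ⟨k, -, rfl⟩ := spanning_adj_none_some.1 h
    exact jahangir_adj_none_some.2 ⟨k, rfl⟩
  · obtain ⟨k, -, rfl⟩ := spanning_adj_some_none.1 h
    exact (jahangir_adj_none_some.2 ⟨k, rfl⟩).symm
  · rw [jahangir_adj_some_some]
    rcases spanning_adj_some_some.1 h with ⟨-, h⟩ | ⟨-, h⟩ <;> simp [h]

theorem spanning_inj {S' : Finset (Fin 3)} {D' : Finset (Fin (n * 3))} :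
    spanning n S D = spanning n S' D' ↔ S = S' ∧ D = D' := by
  refine ⟨fun h => ⟨?_, ?_⟩, fun ⟨hS, hD⟩ => hS ▸ hD ▸ rfl⟩
  · ext k
    have := congrArg (fun G => G.Adj none (some (hub n k))) h
    simpa [hub_injective.eq_iff] using this
  · ext i
    have := congrArg (fun G => G.Adj (some i) (some (i + 1))) h
    simpa [not_iff_not] using this

open Classical in
theorem eq_spanning_of_le {G : SimpleGraph (Option (Fin (n * 3)))} (hG : G ≤ jahangir n 3) :
    G = spanning n {k | G.Adj none (some (hub n k))} {i | ¬ G.Adj (some i) (some (i + 1))} := by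
  have center (i : Fin (n * 3)) :
      G.Adj none (some i) ↔ ∃ k, G.Adj none (some (hub n k)) ∧ hub n k = i := by
    constructor
    · intro h
      obtain ⟨k, rfl⟩ := jahangir_adj_none_some.1 (hG h)
      exact ⟨k, h, rfl⟩
    · rintro ⟨k, h, rfl⟩
      exact h
  ext (_ | i) (_ | j)
  · simp
  · simpa using center j
  · simpa [G.adj_comm] using center i
  · rw [spanning_adj_some_some]
    simp only [Finset.mem_filter, Finset.mem_univ, true_and, not_not]
    constructor
    · intro h
      rcases jahangir_adj_some_some.1 (hG h) with rfl | rfl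
      exacts [.inl ⟨h, rfl⟩, .inr ⟨h.symm, rfl⟩]
    · rintro (⟨h, rfl⟩ | ⟨h, rfl⟩)
      exacts [h, h.symm]

theorem card_edgeSet_spanning :
    Nat.card (spanning n S D).edgeSet = S.card + (n * 3 - D.card) := by
  classical
  rw [spanning, edgeSet_fromEdgeSet, sdiff_eq_left.2, Nat.card_coe_set_eq, Set.ncard_coe_finset,
    Finset.card_union_of_disjoint, Finset.card_image_of_injective, Finset.card_image_of_injective,
    Finset.card_compl, Fintype.card_fin]
  · intro i j h
    obtain rfl | ⟨rfl, h⟩ : i = j ∨ i = j + 1 ∧ i + 1 = j := by simpa using h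
    · rfl
    · exact absurd h (add_one_add_one_ne_self j)
  · intro k k' h
    simpa [hub_injective.eq_iff] using h
  · simp [Finset.disjoint_left]
  · refine Set.disjoint_left.2 fun e he hdiag => ?_
    simp only [Finset.coe_union, Finset.coe_image, Set.mem_union, Set.mem_image] at he
    rcases he with ⟨k, -, rfl⟩ | ⟨i, -, rfl⟩ <;> simp at hdiag

theorem isTree_spanning_iff :
    (spanning n S D).IsTree ↔ (spanning n S D).Connected ∧ S.card = D.card := by
  rw [isTree_iff_connected_and_card, card_edgeSet_spanning, Nat.card_eq_fintype_card,
    Fintype.card_option, Fintype.card_fin]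
  have := D.card_le_univ.trans_eq (Fintype.card_fin _)
  constructor <;> rintro ⟨h, h'⟩ <;> exact ⟨h, by omega⟩

theorem reachable_some_add {G : SimpleGraph (Option (Fin (n * 3)))} {i : Fin (n * 3)} {L : ℕ}
    (h : ∀ t < L, G.Adj (some (i + (t : Fin (n * 3)))) (some (i + t + 1))) :
    G.Reachable (some i) (some (i + (L : Fin (n * 3)))) := by
  induction L with
  | zero => simp
  | succ L ih =>
    refine (ih fun t ht => h t (by omega)).trans ?_
    rw [Nat.cast_succ, ← add_assoc]
    exact (h L (by omega)).reachable

theorem spanning_reachable_none_of_arc {k k' : Fin 3} (hk : k ∈ S) (hk' : k' ∈ S) {L d j : ℕ}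
    (hL : hub n k + (L : Fin (n * 3)) = hub n k')
    (hD : ∀ t < L, hub n k + (t : Fin (n * 3)) ∈ D → t = d) (hj : j ≤ L) :
    (spanning n S D).Reachable (some (hub n k + (j : Fin (n * 3)))) none := by
  by_cases hjd : j ≤ d
  · have arc : (spanning n S D).Reachable (some (hub n k)) (some (hub n k + (j : Fin (n * 3)))) :=
      reachable_some_add fun t ht => spanning_adj_add_one.2 fun hmem => by
        have := hD t (by omega) hmem
        omega
    exact arc.symm.trans (spanning_adj_some_none.2 ⟨k, hk, rfl⟩).reachable
  · have arc : (spanning n S D).Reachable (some (hub n k + (j : Fin (n * 3))))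
        (some (hub n k + (j : Fin (n * 3)) + ((L - j : ℕ) : Fin (n * 3)))) :=
      reachable_some_add fun t ht => spanning_adj_add_one.2 fun hmem => by
        rw [add_assoc, ← Nat.cast_add] at hmem
        have := hD (j + t) (by omega) hmem
        omega
    rw [add_assoc, ← Nat.cast_add, Nat.add_sub_cancel' hj, hL] at arc
    exact arc.trans (spanning_adj_some_none.2 ⟨k', hk', rfl⟩).reachable

/-- Without a cut on the arc, the spoke at `k` would lie on a cycle through the spoke at `k'`. -/
theorem exists_mem_arc_of_isAcyclic (hT : (spanning n S D).IsAcyclic) {k k' : Fin 3}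
    (hk : k ∈ S) (hk' : k' ∈ S) (hne : k ≠ k') {L : ℕ}
    (hL : hub n k + (L : Fin (n * 3)) = hub n k') :
    ∃ t < L, hub n k + (t : Fin (n * 3)) ∈ D := by
  by_contra! hD
  have hbridge := isAcyclic_iff_forall_adj_isBridge.1 hT (spanning_adj_none_some.2 ⟨k, hk, rfl⟩)
  rw [isBridge_iff] at hbridge
  set G := (spanning n S D).deleteEdges {s(none, some (hub n k))}
  have arc : G.Reachable (some (hub n k)) (some (hub n k + (L : Fin (n * 3)))) :=
    reachable_some_add fun t ht => by simp [G, hD t ht]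
  have spoke : G.Adj none (some (hub n k')) := by
    simpa [G, hub_injective.ne hne.symm] using ⟨k', hk', rfl⟩
  rw [hL] at arc
  exact hbridge (spoke.reachable.trans arc.symm)

theorem self_ne_add_one : ∀ k : Fin 3, k ≠ k + 1 := by
  decide

theorem pair_add_one_injective :
    Function.Injective fun k : Fin 3 => ({k, k + 1} : Finset (Fin 3)) := by
  decide

theorem exists_eq_pair_add_one {S : Finset (Fin 3)} (hS : S.card = 2) : ∃ k, S = {k, k + 1} := by
  revert S
  decide

variable (n) in
/-- Codes for the spanning trees of `J_{n,3}`: three spokes and one cut in each arc between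
consecutive hubs; two spokes at `k` and `k + 1` with a cut in the short and one in the long arc
between them; a single spoke and an arbitrary cut. -/
abbrev TreeCode : Type := (Fin 3 → Fin n) ⊕ (Fin 3 × Fin n × Fin (2 * n)) ⊕ (Fin 3 × Fin (n * 3))

namespace TreeCode

def spokes : TreeCode n → Finset (Fin 3)
  | .inl _ => Finset.univ
  | .inr (.inl (k, _, _)) => {k, k + 1}
  | .inr (.inr (k, _)) => {k}

def cuts : TreeCode n → Finset (Fin (n * 3))
  | .inl a => Finset.univ.image fun k => hub n k + ((a k : ℕ) : Fin (n * 3))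
  | .inr (.inl (k, a, b)) =>
    {hub n k + ((a : ℕ) : Fin (n * 3)), hub n (k + 1) + ((b : ℕ) : Fin (n * 3))}
  | .inr (.inr (_, d)) => {d}

theorem hub_add_mem_cuts_inl_iff (a : Fin 3 → Fin n) (k : Fin 3) {t : ℕ} (ht : t < n) :
    hub n k + (t : Fin (n * 3)) ∈ cuts (.inl a) ↔ t = a k := by
  simp only [cuts, Finset.mem_image, Finset.mem_univ, true_and, hub_add_inj (a _).2 ht]
  constructor
  · rintro ⟨k, rfl, h⟩
    exact h.symm
  · rintro rfl
    exact ⟨k, rfl, rfl⟩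

theorem hub_add_mem_cuts_short_iff (k : Fin 3) (a : Fin n) (b : Fin (2 * n)) {t : ℕ} (ht : t < n) :
    hub n k + (t : Fin (n * 3)) ∈ cuts (.inr (.inl (k, a, b))) ↔ t = a := by
  have := b.2
  simp only [cuts, Finset.mem_insert, Finset.mem_singleton, hub_succ_add_eq,
    add_natCast_inj _ (by omega : t < n * 3) (by omega : (a : ℕ) < n * 3),
    add_natCast_inj _ (by omega : t < n * 3) (by omega : n + b < n * 3)]
  omega

theorem hub_succ_add_mem_cuts_long_iff (k : Fin 3) (a : Fin n) (b : Fin (2 * n)) {t : ℕ}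
    (ht : t < 2 * n) :
    hub n (k + 1) + (t : Fin (n * 3)) ∈ cuts (.inr (.inl (k, a, b))) ↔ t = b := by
  have := b.2
  simp only [cuts, Finset.mem_insert, Finset.mem_singleton, hub_succ_add_eq,
    add_natCast_inj _ (by omega : n + t < n * 3) (by omega : (a : ℕ) < n * 3),
    add_natCast_inj _ (by omega : n + t < n * 3) (by omega : n + b < n * 3)]
  omega

theorem card_cuts : ∀ p : TreeCode n, p.cuts.card = p.spokes.card
  | .inl a => by
    rw [cuts, spokes, Finset.card_image_of_injective _ fun k k' h =>
      ((hub_add_inj (a k).2 (a k').2).1 h).1]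
  | .inr (.inl (k, a, b)) => by
    have := b.2
    rw [cuts, spokes, Finset.card_pair (self_ne_add_one k), Finset.card_pair]
    rw [hub_succ_add_eq, Ne, add_natCast_inj _ (by omega) (by omega)]
    omega
  | .inr (.inr (k, d)) => rfl

theorem isTree_spanning (p : TreeCode n) : (spanning n p.spokes p.cuts).IsTree := by
  refine isTree_spanning_iff.2 ⟨connected_of_forall_reachable_none fun i => ?_, (card_cuts p).symm⟩
  rcases p with a | ⟨k, a, b⟩ | ⟨k, d⟩
  · obtain ⟨k, r, hr, rfl⟩ := exists_eq_hub_add i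
    exact spanning_reachable_none_of_arc (k' := k + 1) (Finset.mem_univ _) (Finset.mem_univ _)
      (hub_succ k).symm (fun t ht => (hub_add_mem_cuts_inl_iff a k ht).1) hr.le
  · have hk : k ∈ spokes (.inr (.inl (k, a, b))) := by simp [spokes]
    have hk₁ : k + 1 ∈ spokes (.inr (.inl (k, a, b))) := by simp [spokes]
    have short {j : ℕ} (hj : j ≤ n) := spanning_reachable_none_of_arc hk hk₁ (hub_succ k).symm
      (fun t ht => (hub_add_mem_cuts_short_iff k a b ht).1) hj
    have long {j : ℕ} (hj : j ≤ 2 * n) := spanning_reachable_none_of_arc hk₁ hk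
      (hub_succ_add_two_mul k)
      (fun t ht => (hub_succ_add_mem_cuts_long_iff k a b ht).1) hj
    obtain ⟨k', r, hr, rfl⟩ := exists_eq_hub_add i
    obtain ⟨m, rfl⟩ : ∃ m : Fin 3, k' = k + m := ⟨k' - k, by abel⟩
    rcases (by decide : ∀ m : Fin 3, m = 0 ∨ m = 1 ∨ m = 2) m with rfl | rfl | rfl
    · simpa using short hr.le
    · exact long (by omega)
    · rw [show k + 2 = k + 1 + 1 by rw [add_assoc, one_add_one_eq_two], hub_succ_add_eq]
      exact long (by omega)
  · have hD (t : ℕ) (ht : t < n * 3) (h : hub n k + (t : Fin (n * 3)) ∈ cuts (.inr (.inr (k, d)))) :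
        t = (d - hub n k).val := by
      rw [cuts, Finset.mem_singleton, ← add_natCast_val_sub (hub n k) d,
        add_natCast_inj _ ht (d - hub n k).2] at h
      exact h
    have := spanning_reachable_none_of_arc (Finset.mem_singleton_self k)
      (Finset.mem_singleton_self k) (by rw [Fin.natCast_self, add_zero]) hD
      (j := (i - hub n k).val) (i - hub n k).2.le
    rwa [add_natCast_val_sub] at this

theorem eq_of_spokes_eq_of_cuts_eq :
    ∀ {p q : TreeCode n}, p.spokes = q.spokes → p.cuts = q.cuts → p = q
  | .inl a, .inl a', _, hC => by
    refine congrArg Sum.inl (funext fun k => Fin.ext ?_)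
    have hmem := (hub_add_mem_cuts_inl_iff a' k (a' k).2).2 rfl
    rw [← hC, hub_add_mem_cuts_inl_iff a k (a' k).2] at hmem
    exact hmem.symm
  | .inr (.inl (k, a, b)), .inr (.inl (k', a', b')), hS, hC => by
    obtain rfl : k = k' := pair_add_one_injective hS
    have ha := (hub_add_mem_cuts_short_iff k a b a.2).2 rfl
    have hb := (hub_succ_add_mem_cuts_long_iff k a b b.2).2 rfl
    rw [hC, hub_add_mem_cuts_short_iff k a' b' a.2] at ha
    rw [hC, hub_succ_add_mem_cuts_long_iff k a' b' b.2] at hb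
    rw [Fin.ext ha, Fin.ext hb]
  | .inr (.inr (k, d)), .inr (.inr (k', d')), hS, hC => by
    rw [Finset.singleton_injective hS, Finset.singleton_injective hC]
  | .inl _, .inr (.inl (_, _, _)), hS, _ | .inl _, .inr (.inr (_, _)), hS, _
  | .inr (.inl (_, _, _)), .inl _, hS, _ | .inr (.inl (_, _, _)), .inr (.inr (_, _)), hS, _
  | .inr (.inr (_, _)), .inl _, hS, _ | .inr (.inr (_, _)), .inr (.inl (_, _, _)), hS, _ => by
    have := congrArg Finset.card hS
    simp [spokes] at this

theorem exists_of_isTree (hT : (spanning n S D).IsTree) : ∃ p : TreeCode n, p.spokes = S ∧ p.cuts = D := by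
  obtain ⟨hconn, hcard⟩ := isTree_spanning_iff.1 hT
  suffices ∃ p : TreeCode n, p.spokes = S ∧ p.cuts ⊆ D by
    obtain ⟨p, hS, hD⟩ := this
    exact ⟨p, hS, Finset.eq_of_subset_of_card_le hD (by rw [← hcard, ← hS, card_cuts])⟩
  have hS : 0 < S.card := by
    obtain ⟨_ | i, hi⟩ := hconn.preconnected.exists_adj_of_nontrivial none
    · simp at hi
    · obtain ⟨k, hk, -⟩ := spanning_adj_none_some.1 hi
      exact Finset.card_pos.2 ⟨k, hk⟩
  have hS_le : S.card ≤ 3 := S.card_le_univ.trans_eq (Fintype.card_fin 3)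
  have hac := hT.isAcyclic
  obtain hS₁ | hS₂ | hS₃ : S.card = 1 ∨ S.card = 2 ∨ S.card = 3 := by omega
  · obtain ⟨k, rfl⟩ := Finset.card_eq_one.1 hS₁
    obtain ⟨d, rfl⟩ := Finset.card_eq_one.1 (hcard ▸ hS₁)
    exact ⟨.inr (.inr (k, d)), rfl, subset_rfl⟩
  · obtain ⟨k, rfl⟩ := exists_eq_pair_add_one hS₂
    have hk : k ∈ ({k, k + 1} : Finset (Fin 3)) := Finset.mem_insert_self _ _
    have hk₁ : k + 1 ∈ ({k, k + 1} : Finset (Fin 3)) := by simp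
    obtain ⟨a, ha, haD⟩ :=
      exists_mem_arc_of_isAcyclic hac hk hk₁ (self_ne_add_one k) (hub_succ k).symm
    obtain ⟨b, hb, hbD⟩ :=
      exists_mem_arc_of_isAcyclic hac hk₁ hk (self_ne_add_one k).symm (hub_succ_add_two_mul k)
    exact ⟨.inr (.inl (k, ⟨a, ha⟩, ⟨b, hb⟩)), rfl,
      Finset.insert_subset haD (Finset.singleton_subset_iff.2 hbD)⟩
  · obtain rfl := Finset.eq_univ_of_card S (hS₃.trans (Fintype.card_fin 3).symm)
    choose a ha haD using fun k : Fin 3 =>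
      exists_mem_arc_of_isAcyclic hac (Finset.mem_univ k) (Finset.mem_univ (k + 1))
        (self_ne_add_one k) (hub_succ k).symm
    refine ⟨.inl fun k => ⟨a k, ha k⟩, rfl, ?_⟩
    simpa [cuts, Finset.image_subset_iff] using haD

end TreeCode

variable (n) in
noncomputable def treeCodeEquiv :
    TreeCode n ≃ {T : SimpleGraph (Option (Fin (n * 3))) // T ≤ jahangir n 3 ∧ T.IsTree} :=
  Equiv.ofBijective (fun p => ⟨spanning n p.spokes p.cuts, spanning_le, p.isTree_spanning⟩) <| by
    refine ⟨fun p q h => ?_, fun ⟨T, hle, hT⟩ => ?_⟩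
    · obtain ⟨hS, hD⟩ := spanning_inj.1 (congrArg Subtype.val h)
      exact TreeCode.eq_of_spokes_eq_of_cuts_eq hS hD
    · have hT' := eq_spanning_of_le hle
      rw [hT'] at hT
      obtain ⟨p, hS, hD⟩ := TreeCode.exists_of_isTree hT
      exact ⟨p, Subtype.ext (show spanning n p.spokes p.cuts = T by rw [hS, hD, ← hT'])⟩

end Jahangir

/-- The number of spanning trees of the Jahangir graph `J_{n,3}`, as a function
of `n`, is `n^3 + 3·(2n)·n + 3·(3n) = n^3 + 6n^2 + 9n`. -/
theorem jahangir_n_three_spanningTreeCount (n : ℕ) (hn : 2 ≤ n) :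
    spanningTreeCount (jahangir n 3) = n ^ 3 + 3 * (2 * n) * n + 3 * (3 * n) := by
  have : NeZero n := ⟨by omega⟩
  rw [spanningTreeCount_eq_card, ← Nat.card_congr (Jahangir.treeCodeEquiv n),
    Nat.card_eq_fintype_card]
  simp only [Fintype.card_sum, Fintype.card_prod, Fintype.card_fun, Fintype.card_fin]
  ring
end
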